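/- Schur-type integral bounds for the commutator kernel. Fix n ≥ 1, β ∈ [0,1] and a ∈ C_c^∞(ℝⁿ × ℝⁿ). There exists C > 0 such that for all f ∈ C^{0,β}(ℝⁿ) and all h > 0: sup_{x ∈ ℝⁿ} ∫_{ℝⁿ} |f(x)−f(y)| |K_a^h(x,y)| dy + sup_{y ∈ ℝⁿ} ∫_{ℝⁿ} |f(x)−f(y)| |K_a^h(x,y)| dx ≤ C h^{β} ‖f‖_{C^{0,β}}, where K_a^h(x,y) = (2πh)^{−n} ∫_{ℝⁿ} e^{i⟨x−y,ξ⟩/h} a(x,ξ) dξ. -/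

import Mathlib

open MeasureTheory Real Filter
open scoped Topology RealInnerProductSpace

noncomputable section

variable (n : ℕ)

/-- Euclidean space `ℝⁿ`. -/
abbrev Euc (n : ℕ) := EuclideanSpace ℝ (Fin n)

/-- The semiclassical kernel
`K_a^h(x,y) = (2πh)^{−n} ∫ e^{i⟨x−y,ξ⟩/h} a(x,ξ) dξ`. -/
def Kker (n : ℕ) (a : Euc n × Euc n → ℂ) (h : ℝ) (x y : Euc n) : ℂ :=
  ((((2 * Real.pi * h) ^ n)⁻¹ : ℝ) : ℂ) *
    ∫ ξ : Euc n, Complex.exp (Complex.I * ((⟪x - y, ξ⟫ / h : ℝ) : ℂ)) * a (x, ξ)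

/-- The semiclassical quantization `Op_h(a)`. -/
def Oph (n : ℕ) (a : Euc n × Euc n → ℂ) (h : ℝ) (u : Euc n → ℂ) (x : Euc n) : ℂ :=
  ∫ y : Euc n, Kker n a h x y * u y

/-- The `L²(ℝⁿ)` norm. -/
def L2E (n : ℕ) (u : Euc n → ℂ) : ℝ := (∫ x : Euc n, ‖u x‖ ^ 2) ^ ((1 : ℝ) / 2)

/-- The sup part of the `C^{0,β}` norm. -/
def supNorm (n : ℕ) (f : Euc n → ℂ) : ℝ := ⨆ x : Euc n, ‖f x‖

/-- The Hölder seminorm `sup_{x≠y} |f(x)−f(y)|/|x−y|^β`. -/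
def holderSemi (n : ℕ) (β : ℝ) (f : Euc n → ℂ) : ℝ :=
  ⨆ p : {q : Euc n × Euc n // q.1 ≠ q.2}, ‖f p.1.1 - f p.1.2‖ / dist p.1.1 p.1.2 ^ β

/-- The `C^{0,β}` norm `sup |f| + sup_{x≠y} |f(x)−f(y)|/|x−y|^β`. -/
def holderNorm (n : ℕ) (β : ℝ) (f : Euc n → ℂ) : ℝ := supNorm n f + holderSemi n β f

/-- `f ∈ C^{0,β}(ℝⁿ)`: `f` is bounded and its `β`-Hölder seminorm is finite. -/
def MemHolderE (n : ℕ) (β : ℝ) (f : Euc n → ℂ) : Prop :=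
  BddAbove (Set.range fun x : Euc n => ‖f x‖) ∧
  BddAbove (Set.range fun p : {q : Euc n × Euc n // q.1 ≠ q.2} =>
    ‖f p.1.1 - f p.1.2‖ / dist p.1.1 p.1.2 ^ β)



section SopAux

variable {E : Type*} [NormedAddCommGroup E] [NormedSpace ℝ E]

/-- half-difference operator -/
def Sop {F : Type*} [NormedAddCommGroup F] [NormedSpace ℝ F] (W : E) (c : E → F) : E → F :=
  fun p => (2 : ℝ)⁻¹ • (c p - c (p + W))

variable {F : Type*} [NormedAddCommGroup F] [NormedSpace ℝ F]

lemma Sop_contDiff {W : E} {c : E → F} (hc : ContDiff ℝ (⊤ : ℕ∞) c) : ContDiff ℝ (⊤ : ℕ∞) (Sop W c) :=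
  (hc.sub (hc.comp (contDiff_id.add contDiff_const))).const_smul _

lemma Sop_iter_contDiff {W : E} {c : E → F} (hc : ContDiff ℝ (⊤ : ℕ∞) c) (m : ℕ) :
    ContDiff ℝ (⊤ : ℕ∞) ((Sop W)^[m] c) := by
  induction m with
  | zero => exact hc
  | succ m ih => rw [Function.iterate_succ_apply']; exact Sop_contDiff ih

lemma Sop_fderiv {W : E} {c : E → F} (hc : ContDiff ℝ (⊤ : ℕ∞) c) (p : E) :
    fderiv ℝ (Sop W c) p = Sop W (fderiv ℝ c) p := by
  have hd := hc.differentiable (by simp)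
  have h1 : HasFDerivAt (fun q => c (q + W)) (fderiv ℝ c (p + W)) p := by
    have := ((hd (p + W)).hasFDerivAt).comp p ((hasFDerivAt_id p).add_const W)
    exact this
  have h2 : HasFDerivAt (Sop W c) ((2 : ℝ)⁻¹ • (fderiv ℝ c p - fderiv ℝ c (p + W))) p :=
    ((hd p).hasFDerivAt.sub h1).const_smul _
  rw [h2.fderiv]; rfl

lemma Sop_iter_fderiv {W : E} {c : E → F} (hc : ContDiff ℝ (⊤ : ℕ∞) c) (m : ℕ) (p : E) :
    fderiv ℝ ((Sop W)^[m] c) p = (Sop W)^[m] (fderiv ℝ c) p := by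
  induction m generalizing p with
  | zero => rfl
  | succ m ih =>
    rw [Function.iterate_succ_apply', Sop_fderiv (Sop_iter_contDiff hc m),
      Function.iterate_succ_apply']
    show (2:ℝ)⁻¹ • (fderiv ℝ ((Sop W)^[m] c) p - fderiv ℝ ((Sop W)^[m] c) (p + W)) =
      (2:ℝ)⁻¹ • ((Sop W)^[m] (fderiv ℝ c) p - (Sop W)^[m] (fderiv ℝ c) (p + W))
    rw [ih p, ih (p + W)]

lemma Sop_iter_norm_le {E : Type u} [NormedAddCommGroup E] [NormedSpace ℝ E] :
    ∀ (m : ℕ) {F : Type u} [NormedAddCommGroup F] [NormedSpace ℝ F]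
      (W : E) (c : E → F) (M : ℝ), ContDiff ℝ (⊤ : ℕ∞) c →
      (∀ p, ‖iteratedFDeriv ℝ m c p‖ ≤ M) → ∀ p, ‖(Sop W)^[m] c p‖ ≤ (‖W‖ / 2) ^ m * M
  | 0, F, _, _, W, c, M, hc, hM, p => by
      simpa [norm_iteratedFDeriv_zero] using hM p
  | (m + 1), F, _, _, W, c, M, hc, hM, p => by
      have hrec : ∀ q, ‖(Sop W)^[m] (fderiv ℝ c) q‖ ≤ (‖W‖ / 2) ^ m * M :=
        Sop_iter_norm_le m W (fderiv ℝ c) M (hc.fderiv_right (by simp))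
          (fun q => by rw [norm_iteratedFDeriv_fderiv]; exact hM q)
      have hds : ContDiff ℝ (⊤ : ℕ∞) ((Sop W)^[m] c) := Sop_iter_contDiff hc m
      have hmvt : ‖(Sop W)^[m] c (p + W) - (Sop W)^[m] c p‖ ≤
          ((‖W‖ / 2) ^ m * M) * ‖(p + W) - p‖ := by
        refine Convex.norm_image_sub_le_of_norm_fderiv_le
          (fun q _ => (hds.differentiable (by simp) q)) (fun q _ => ?_) convex_univ trivial trivial
        rw [Sop_iter_fderiv hc m q]; exact hrec q
      rw [Function.iterate_succ_apply']
      have : ‖Sop W ((Sop W)^[m] c) p‖ =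
          (2 : ℝ)⁻¹ * ‖(Sop W)^[m] c (p + W) - (Sop W)^[m] c p‖ := by
        rw [Sop, norm_smul, ← norm_neg ((Sop W)^[m] c p - (Sop W)^[m] c (p + W))]
        simp [neg_sub]
      rw [this]
      have hW : ‖(p + W) - p‖ = ‖W‖ := by rw [add_sub_cancel_left]
      rw [hW] at hmvt
      calc (2 : ℝ)⁻¹ * ‖(Sop W)^[m] c (p + W) - (Sop W)^[m] c p‖
          ≤ (2 : ℝ)⁻¹ * (((‖W‖ / 2) ^ m * M) * ‖W‖) := by
            apply mul_le_mul_of_nonneg_left hmvt; norm_num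
        _ = (‖W‖ / 2) ^ (m + 1) * M := by ring

lemma Sop_iter_support {W : E} {c : E → F} (m : ℕ) (p : E)
    (h : (Sop W)^[m] c p ≠ 0) : ∃ j ∈ Finset.range (m + 1), c (p + (j : ℝ) • W) ≠ 0 := by
  induction m generalizing p with
  | zero => exact ⟨0, by simp, by simpa using h⟩
  | succ m ih =>
    rw [Function.iterate_succ_apply'] at h
    have h2 : (Sop W)^[m] c p ≠ 0 ∨ (Sop W)^[m] c (p + W) ≠ 0 := by
      by_contra hcon
      push_neg at hcon
      rw [Sop] at h
      simp [hcon.1, hcon.2] at h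
    rcases h2 with h2 | h2
    · obtain ⟨j, hj, hcj⟩ := ih p h2
      exact ⟨j, Finset.mem_range.mpr (lt_trans (Finset.mem_range.mp hj) (by omega)), hcj⟩
    · obtain ⟨j, hj, hcj⟩ := ih (p + W) h2
      refine ⟨j + 1, Finset.mem_range.mpr (by have := Finset.mem_range.mp hj; omega), ?_⟩
      have : p + (((j + 1) : ℕ) : ℝ) • W = p + W + (j : ℝ) • W := by
        push_cast
        rw [add_smul, one_smul]
        abel
      rwa [this]

lemma Sop_compactSupport {W : E} {c : E → F} (hc : HasCompactSupport c) :
    HasCompactSupport (Sop W c) := by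
  refine HasCompactSupport.intro (K := tsupport c ∪ (Homeomorph.addRight W ⁻¹' tsupport c))
    (hc.union ((Homeomorph.addRight W).isCompact_preimage.mpr hc)) (fun p hp => ?_)
  simp only [Set.mem_union, not_or] at hp
  have h1 : c p = 0 := image_eq_zero_of_notMem_tsupport hp.1
  have h2 : c (p + W) = 0 := image_eq_zero_of_notMem_tsupport hp.2
  simp [Sop, h1, h2]

lemma Sop_iter_compactSupport {W : E} {c : E → F} (hc : HasCompactSupport c) (m : ℕ) :
    HasCompactSupport ((Sop W)^[m] c) := by
  induction m with
  | zero => exact hc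
  | succ m ih => rw [Function.iterate_succ_apply']; exact Sop_compactSupport ih

end SopAux

section OscAux

abbrev Euc' (n : ℕ) := EuclideanSpace ℝ (Fin n)

variable {n : ℕ}

/-- the phase factor -/
def phs (v ξ : Euc' n) : ℂ := Complex.exp (Complex.I * ((⟪v, ξ⟫ : ℝ) : ℂ))

lemma phs_def (v ξ : Euc' n) : phs v ξ = Complex.exp (Complex.I * ((⟪v, ξ⟫ : ℝ) : ℂ)) := rfl

lemma phs_continuous (v : Euc' n) : Continuous (phs v) := by
  show Continuous fun ξ : Euc' n => Complex.exp (Complex.I * ((⟪v, ξ⟫ : ℝ) : ℂ))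
  exact Complex.continuous_exp.comp (continuous_const.mul
    (Complex.continuous_ofReal.comp (continuous_const.inner continuous_id)))

lemma phs_norm (v ξ : Euc' n) : ‖phs v ξ‖ = 1 := by
  rw [phs_def, Complex.norm_exp]
  simp [Complex.mul_re]

lemma slice_compactSupport (b : Euc' n × Euc' n → ℂ) (hb : HasCompactSupport b) (x : Euc' n) :
    HasCompactSupport fun ξ : Euc' n => b (x, ξ) := by
  refine HasCompactSupport.intro (K := Prod.snd '' tsupport b) (hb.image continuous_snd)
    (fun ξ hξ => ?_)
  by_contra hne
  exact hξ ⟨(x, ξ), subset_tsupport b hne, rfl⟩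

lemma integrable_phs_mul (v : Euc' n) (g : Euc' n → ℂ) (hg : Continuous g)
    (hgc : HasCompactSupport g) : Integrable fun ξ => phs v ξ * g ξ := by
  exact Continuous.integrable_of_hasCompactSupport ((phs_continuous v).mul hg) hgc.mul_left

lemma phs_sub {v w : Euc' n} (hvw : ⟪v, w⟫ = π) (ξ : Euc' n) :
    phs v (ξ - w) = - phs v ξ := by
  rw [phs_def, phs_def, inner_sub_right, hvw]
  have : (Complex.I * (((⟪v, ξ⟫ : ℝ) - π : ℝ) : ℂ)) =
      Complex.I * ((⟪v, ξ⟫ : ℝ) : ℂ) - (π : ℂ) * Complex.I := by push_cast; ring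
  rw [this, Complex.exp_sub, Complex.exp_pi_mul_I]
  rw [div_neg, div_one]

lemma osc_step (b : Euc' n × Euc' n → ℂ) (hb : Continuous b) (hbc : HasCompactSupport b)
    (x v w : Euc' n) (hvw : ⟪v, w⟫ = π) :
    ∫ ξ : Euc' n, phs v ξ * b (x, ξ) =
      ∫ ξ : Euc' n, phs v ξ * Sop ((0 : Euc' n), w) b (x, ξ) := by
  have hslice : Continuous fun ξ : Euc' n => b (x, ξ) :=
    hb.comp (Continuous.prodMk_right x)
  have h1 : Integrable fun ξ => phs v ξ * b (x, ξ) :=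
    integrable_phs_mul v _ hslice (slice_compactSupport b hbc x)
  have hslice2 : Continuous fun ξ : Euc' n => b (x, ξ + w) :=
    hslice.comp (continuous_id.add continuous_const)
  have hsc2 : HasCompactSupport fun ξ : Euc' n => b (x, ξ + w) :=
    (slice_compactSupport b hbc x).comp_homeomorph (Homeomorph.addRight w)
  have h2 : Integrable fun ξ => phs v ξ * b (x, ξ + w) :=
    integrable_phs_mul v _ hslice2 hsc2
  have key : (∫ ξ : Euc' n, phs v ξ * b (x, ξ + w)) = - ∫ ξ : Euc' n, phs v ξ * b (x, ξ) := by
    have hshift := MeasureTheory.integral_add_right_eq_self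
      (μ := (volume : Measure (Euc' n))) (fun ξ => phs v (ξ - w) * b (x, ξ)) w
    simp only [add_sub_cancel_right] at hshift
    rw [hshift]
    have : ∀ ξ : Euc' n, phs v (ξ - w) * b (x, ξ) = - (phs v ξ * b (x, ξ)) := by
      intro ξ; rw [phs_sub hvw]; ring
    simp only [this]
    exact integral_neg _
  have expand : ∀ ξ : Euc' n, phs v ξ * Sop ((0 : Euc' n), w) b (x, ξ) =
      (2 : ℝ)⁻¹ • (phs v ξ * b (x, ξ) - phs v ξ * b (x, ξ + w)) := by
    intro ξ
    have hpt : ((x, ξ) : Euc' n × Euc' n) + ((0 : Euc' n), w) = (x, ξ + w) := by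
      rw [Prod.mk_add_mk, add_zero]
    rw [Sop, hpt]
    simp only [Complex.real_smul]
    push_cast
    ring
  rw [show (fun ξ : Euc' n => phs v ξ * Sop ((0 : Euc' n), w) b (x, ξ)) =
      (fun ξ : Euc' n => (2 : ℝ)⁻¹ • (phs v ξ * b (x, ξ) - phs v ξ * b (x, ξ + w))) from
      funext expand]
  rw [integral_smul, integral_sub h1 h2, key]
  rw [Complex.real_smul]
  push_cast
  ring

lemma osc_iter (b : Euc' n × Euc' n → ℂ) (hb : ContDiff ℝ (⊤ : ℕ∞) b) (hbc : HasCompactSupport b)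
    (x v w : Euc' n) (hvw : ⟪v, w⟫ = π) (m : ℕ) :
    ∫ ξ : Euc' n, phs v ξ * b (x, ξ) =
      ∫ ξ : Euc' n, phs v ξ * ((Sop ((0 : Euc' n), w))^[m] b) (x, ξ) := by
  induction m with
  | zero => rfl
  | succ m ih =>
    rw [ih, Function.iterate_succ_apply']
    exact osc_step _ ((Sop_iter_contDiff hb m).continuous) (Sop_iter_compactSupport hbc m)
      x v w hvw

end OscAux

section Decay
open scoped ENNReal

variable {n : ℕ}

lemma osc_decay (n : ℕ) (a : Euc' n × Euc' n → ℂ) (ha : ContDiff ℝ (⊤ : ℕ∞) a)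
    (hac : HasCompactSupport a) :
    ∃ C : ℝ, 0 < C ∧ ∀ (x v : Euc' n),
      ‖∫ ξ : Euc' n, phs v ξ * a (x, ξ)‖ * (1 + ‖v‖) ^ (n + 2) ≤ C := by
  obtain ⟨M0, hM0⟩ := ha.continuous.bounded_above_of_compact_support hac
  obtain ⟨Am, hAm⟩ := (ContDiff.continuous_iteratedFDeriv (by exact WithTop.coe_le_coe.mpr (le_top : ((n + 2 : ℕ) : ℕ∞) ≤ ⊤)) ha).bounded_above_of_compact_support
    (hac.iteratedFDeriv (n + 2))
  have hM0' : (0:ℝ) ≤ M0 := le_trans (norm_nonneg _) (hM0 (0, 0))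
  have hAm' : (0:ℝ) ≤ Am := le_trans (norm_nonneg _) (hAm (0, 0))
  set K2 : Set (Euc' n) := Prod.snd '' tsupport a with hK2
  have hK2c : IsCompact K2 := hac.image continuous_snd
  set κ := (volume K2).toReal with hκ
  have hκ0 : (0:ℝ) ≤ κ := ENNReal.toReal_nonneg
  -- trivial bound
  have B1 : ∀ (x v : Euc' n), ‖∫ ξ : Euc' n, phs v ξ * a (x, ξ)‖ ≤ M0 * κ := by
    intro x v
    have hz : ∀ ξ ∉ K2, phs v ξ * a (x, ξ) = 0 := by
      intro ξ hξ
      have : a (x, ξ) = 0 := by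
        by_contra hne
        exact hξ ⟨(x, ξ), subset_tsupport a hne, rfl⟩
      rw [this, mul_zero]
    rw [← MeasureTheory.setIntegral_eq_integral_of_forall_compl_eq_zero hz]
    exact MeasureTheory.norm_setIntegral_le_of_norm_le_const (μ := volume) (s := K2) (C := M0) (f := fun ξ => phs v ξ * a (x, ξ))
      hK2c.measure_lt_top (fun ξ _ => by rw [norm_mul, phs_norm, one_mul]; exact hM0 _)
  -- decay bound
  have B2 : ∀ (x v : Euc' n), v ≠ 0 →
      ‖∫ ξ : Euc' n, phs v ξ * a (x, ξ)‖ ≤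
        ((n:ℝ) + 3) * κ * ((π / ‖v‖ / 2) ^ (n + 2) * Am) := by
    intro x v hv
    have hvn : (0:ℝ) < ‖v‖ := norm_pos_iff.mpr hv
    set w : Euc' n := (π / ‖v‖ ^ 2) • v with hw
    have hvw : ⟪v, w⟫ = π := by
      rw [hw, real_inner_smul_right, real_inner_self_eq_norm_sq]
      field_simp
    have hwn : ‖w‖ = π / ‖v‖ := by
      rw [hw, norm_smul, Real.norm_eq_abs, abs_of_pos (by positivity)]
      field_simp
    set W : Euc' n × Euc' n := ((0 : Euc' n), w) with hW
    have hWn : ‖W‖ = ‖w‖ := by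
      rw [hW, Prod.norm_def]
      simp
    rw [osc_iter a ha hac x v w hvw (n + 2)]
    have hcpt : ∀ p, ‖(Sop W)^[n+2] a p‖ ≤ (‖W‖ / 2) ^ (n+2) * Am :=
      Sop_iter_norm_le (n+2) W a Am ha hAm
    set U : Set (Euc' n) := ⋃ j ∈ Finset.range (n + 3), (fun ξ : Euc' n => ξ + (j : ℝ) • w) ⁻¹' K2
      with hU
    have hUz : ∀ ξ ∉ U, phs v ξ * (Sop W)^[n+2] a (x, ξ) = 0 := by
      intro ξ hξ
      have : (Sop W)^[n+2] a (x, ξ) = 0 := by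
        by_contra hne
        obtain ⟨j, hj, hcj⟩ := Sop_iter_support (n+2) (x, ξ) hne
        have hps : ((x, ξ) : Euc' n × Euc' n) + (j : ℝ) • W = (x, ξ + (j : ℝ) • w) := by
          rw [hW, Prod.smul_mk, smul_zero, Prod.mk_add_mk, add_zero]
        rw [hps] at hcj
        have hmem : ξ + (j : ℝ) • w ∈ K2 :=
          ⟨(x, ξ + (j : ℝ) • w), subset_tsupport a hcj, rfl⟩
        have hj' : j ∈ Finset.range (n + 3) := by
          simp only [Finset.mem_range] at hj ⊢; omega
        exact hξ (Set.mem_biUnion hj' hmem)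
      rw [this, mul_zero]
    have hUm : volume U ≤ ((n : ℝ≥0∞) + 3) * volume K2 := by
      calc volume U ≤ ∑ j ∈ Finset.range (n + 3),
            volume ((fun ξ : Euc' n => ξ + (j : ℝ) • w) ⁻¹' K2) :=
            measure_biUnion_finset_le _ _
        _ = ∑ _j ∈ Finset.range (n + 3), volume K2 :=
            Finset.sum_congr rfl (fun j _ => measure_preimage_add_right volume _ K2)
        _ = ((n : ℝ≥0∞) + 3) * volume K2 := by
            rw [Finset.sum_const, Finset.card_range, nsmul_eq_mul]
            push_cast
            ring
    have hfin : ((n : ℝ≥0∞) + 3) * volume K2 ≠ ⊤ :=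
      ENNReal.mul_ne_top (by simp) hK2c.measure_lt_top.ne
    have hUlt : volume U < ⊤ := lt_of_le_of_lt hUm (lt_of_le_of_ne le_top hfin)
    rw [← MeasureTheory.setIntegral_eq_integral_of_forall_compl_eq_zero hUz]
    have hbd := MeasureTheory.norm_setIntegral_le_of_norm_le_const (μ := volume) (s := U)
      (C := (‖W‖ / 2) ^ (n+2) * Am) (f := fun ξ => phs v ξ * (Sop W)^[n+2] a (x, ξ)) hUlt
      (fun ξ _ => by rw [norm_mul, phs_norm, one_mul]; exact hcpt _)
    refine le_trans hbd ?_
    have htr : (volume U).toReal ≤ ((n : ℝ) + 3) * κ := by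
      have h1 := ENNReal.toReal_mono hfin hUm
      refine le_trans h1 ?_
      rw [ENNReal.toReal_mul]
      gcongr
      simp [ENNReal.toReal_add]
    have hC0 : (0:ℝ) ≤ (‖W‖ / 2) ^ (n+2) * Am :=
      mul_nonneg (pow_nonneg (by positivity) _) hAm'
    calc (‖W‖ / 2) ^ (n+2) * Am * (volume U).toReal
        ≤ (‖W‖ / 2) ^ (n+2) * Am * (((n:ℝ) + 3) * κ) :=
          mul_le_mul_of_nonneg_left htr hC0
      _ = ((n:ℝ) + 3) * κ * ((‖W‖ / 2) ^ (n+2) * Am) := by ring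
      _ = ((n:ℝ) + 3) * κ * ((π / ‖v‖ / 2) ^ (n+2) * Am) := by rw [hWn, hwn]
  -- combine
  refine ⟨max (M0 * κ * 2 ^ (n+2)) (((n:ℝ) + 3) * κ * (π ^ (n+2) * Am)) + 1, by positivity,
    fun x v => ?_⟩
  rcases le_or_gt ‖v‖ 1 with hv1 | hv1
  · have h1 : (1 + ‖v‖) ^ (n+2) ≤ 2 ^ (n+2) := by
      apply pow_le_pow_left₀ (by positivity)
      linarith
    calc ‖∫ ξ : Euc' n, phs v ξ * a (x, ξ)‖ * (1 + ‖v‖) ^ (n + 2)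
        ≤ (M0 * κ) * 2 ^ (n+2) := by
          apply mul_le_mul (B1 x v) h1 (by positivity)
          exact mul_nonneg hM0' hκ0
      _ ≤ _ := by
          have := le_max_left (M0 * κ * 2 ^ (n+2)) (((n:ℝ) + 3) * κ * (π ^ (n+2) * Am))
          linarith
  · have hv : v ≠ 0 := by
      intro hz; rw [hz, norm_zero] at hv1; linarith
    have hvn : (0:ℝ) < ‖v‖ := norm_pos_iff.mpr hv
    have h1 : (1 + ‖v‖) ^ (n+2) ≤ (2 * ‖v‖) ^ (n+2) := by
      apply pow_le_pow_left₀ (by positivity)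
      linarith
    have hmul : (π / ‖v‖ / 2) * (2 * ‖v‖) = π := by
      field_simp
    have hkey : ((n:ℝ) + 3) * κ * ((π / ‖v‖ / 2) ^ (n+2) * Am) * (2 * ‖v‖) ^ (n+2) =
        ((n:ℝ) + 3) * κ * (π ^ (n+2) * Am) := by
      have hpp : (π / ‖v‖ / 2) ^ (n+2) * (2 * ‖v‖) ^ (n+2) = π ^ (n+2) := by
        rw [← mul_pow, hmul]
      calc ((n:ℝ) + 3) * κ * ((π / ‖v‖ / 2) ^ (n+2) * Am) * (2 * ‖v‖) ^ (n+2)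
          = ((n:ℝ) + 3) * κ * Am * ((π / ‖v‖ / 2) ^ (n+2) * (2 * ‖v‖) ^ (n+2)) := by
            ring
        _ = ((n:ℝ) + 3) * κ * (π ^ (n+2) * Am) := by rw [hpp]; ring
    calc ‖∫ ξ : Euc' n, phs v ξ * a (x, ξ)‖ * (1 + ‖v‖) ^ (n + 2)
        ≤ (((n:ℝ) + 3) * κ * ((π / ‖v‖ / 2) ^ (n+2) * Am)) * (2 * ‖v‖) ^ (n+2) := by
          apply mul_le_mul (B2 x v hv) h1 (by positivity)
          have : (0:ℝ) ≤ (π / ‖v‖ / 2) ^ (n+2) * Am :=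
            mul_nonneg (pow_nonneg (by positivity) _) hAm'
          positivity
      _ = ((n:ℝ) + 3) * κ * (π ^ (n+2) * Am) := hkey
      _ ≤ _ := by
          have := le_max_right (M0 * κ * 2 ^ (n+2)) (((n:ℝ) + 3) * κ * (π ^ (n+2) * Am))
          linarith

end Decay

/-- Schur-type integral bounds for the commutator kernel:
`sup_x ∫ |f(x)−f(y)||K_a^h(x,y)| dy + sup_y ∫ |f(x)−f(y)||K_a^h(x,y)| dx ≤ C h^β ‖f‖_{C^{0,β}}`. -/
theorem commutator_kernel_schur_bound
    (n : ℕ) (hn : 1 ≤ n) (β : ℝ) (hβ0 : 0 ≤ β) (hβ1 : β ≤ 1)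
    (a : Euc n × Euc n → ℂ) (ha : ContDiff ℝ (⊤ : ℕ∞) a) (hac : HasCompactSupport a) :
    ∃ C : ℝ, 0 < C ∧
      ∀ f : Euc n → ℂ, MemHolderE n β f → ∀ h : ℝ, 0 < h →
        (⨆ x : Euc n, ∫ y : Euc n, ‖f x - f y‖ * ‖Kker n a h x y‖) +
          (⨆ y : Euc n, ∫ x : Euc n, ‖f x - f y‖ * ‖Kker n a h x y‖) ≤
            C * h ^ β * holderNorm n β f := by

  obtain ⟨Cd, hCd, hDecay⟩ := osc_decay n a ha hac
  set ψ : Euc n → ℝ := fun z => ((1 + ‖z‖) ^ (n + 1))⁻¹ with hψ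
  have hψi : Integrable ψ := by
    have h1 : ((Module.finrank ℝ (Euc n) : ℝ)) < ((n : ℝ) + 1) := by
      rw [finrank_euclideanSpace_fin]; linarith
    have h2 := integrable_one_add_norm (E := Euc n) (μ := volume) h1
    refine h2.congr ?_
    filter_upwards with z
    rw [hψ]
    have h3 : (0:ℝ) < 1 + ‖z‖ := by positivity
    rw [Real.rpow_neg h3.le]
    congr 1
    rw [show ((n : ℝ) + 1) = ((n + 1 : ℕ) : ℝ) by push_cast; ring, Real.rpow_natCast]
  have hψ0 : ∀ z, 0 ≤ ψ z := fun z => by rw [hψ]; positivity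
  set Jψ : ℝ := ∫ z : Euc n, ψ z with hJ
  have hJ0 : 0 ≤ Jψ := integral_nonneg hψ0
  set Cfin : ℝ := Cd * ((2 * π) ^ n)⁻¹ * Jψ with hCfin
  have hCfin0 : 0 ≤ Cfin := by
    apply mul_nonneg (mul_nonneg hCd.le _) hJ0
    positivity
  refine ⟨2 * Cfin + 1, by positivity, fun f hf h hh => ?_⟩
  set H := holderSemi n β f with hHdef
  have hH0 : 0 ≤ H := Real.iSup_nonneg fun p => div_nonneg (norm_nonneg _) (by positivity)
  have hhβ0 : (0:ℝ) ≤ h ^ β := Real.rpow_nonneg hh.le β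
  -- Hölder bound
  have hfd : ∀ x y : Euc n, ‖f x - f y‖ ≤ H * ‖x - y‖ ^ β := by
    intro x y
    by_cases hxy : x = y
    · rw [hxy, sub_self, norm_zero]
      exact mul_nonneg hH0 (Real.rpow_nonneg (norm_nonneg _) _)
    · have key := le_ciSup hf.2 ⟨(x, y), hxy⟩
      have hd : (0:ℝ) < dist x y ^ β := Real.rpow_pos_of_pos (dist_pos.mpr hxy) β
      have := (div_le_iff₀ hd).mp key
      rwa [dist_eq_norm] at this
  -- kernel bound
  have hKb : ∀ x y : Euc n, ‖Kker n a h x y‖ ≤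
      ((2 * π * h) ^ n)⁻¹ * (Cd * ((1 + ‖h⁻¹ • (x - y)‖) ^ (n + 2))⁻¹) := by
    intro x y
    have hphase : (∫ ξ : Euc n, Complex.exp (Complex.I * ((⟪x - y, ξ⟫ / h : ℝ) : ℂ)) * a (x, ξ))
        = ∫ ξ : Euc n, phs (h⁻¹ • (x - y)) ξ * a (x, ξ) := by
      congr 1
      funext ξ
      rw [phs_def, real_inner_smul_left, div_eq_inv_mul]
    rw [Kker, hphase, norm_mul, Complex.norm_real, Real.norm_eq_abs,
      abs_of_nonneg (by positivity)]
    apply mul_le_mul_of_nonneg_left _ (by positivity)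
    have hpow : (0:ℝ) < (1 + ‖h⁻¹ • (x - y)‖) ^ (n + 2) := by positivity
    calc ‖∫ ξ : Euc n, phs (h⁻¹ • (x - y)) ξ * a (x, ξ)‖
        ≤ Cd / (1 + ‖h⁻¹ • (x - y)‖) ^ (n + 2) :=
          (le_div_iff₀ hpow).mpr (hDecay x (h⁻¹ • (x - y)))
      _ = Cd * ((1 + ‖h⁻¹ • (x - y)‖) ^ (n + 2))⁻¹ := div_eq_mul_inv _ _
  -- pointwise bound
  set D : ℝ := H * h ^ β * Cd * ((2 * π * h) ^ n)⁻¹ with hD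
  have hD0 : 0 ≤ D := by
    apply mul_nonneg (mul_nonneg (mul_nonneg hH0 hhβ0) hCd.le)
    positivity
  have hpt : ∀ x y : Euc n, ‖f x - f y‖ * ‖Kker n a h x y‖ ≤ D * ψ (h⁻¹ • (x - y)) := by
    intro x y
    set v : Euc n := h⁻¹ • (x - y) with hv
    have hxy : x - y = h • v := (smul_inv_smul₀ hh.ne' (x - y)).symm
    have hnv : ‖x - y‖ = h * ‖v‖ := by
      rw [hxy, norm_smul, Real.norm_eq_abs, abs_of_pos hh]
    have hvβ : ‖x - y‖ ^ β ≤ h ^ β * (1 + ‖v‖) := by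
      rw [hnv, Real.mul_rpow hh.le (norm_nonneg v)]
      apply mul_le_mul_of_nonneg_left _ hhβ0
      calc ‖v‖ ^ β ≤ (1 + ‖v‖) ^ β := by
            apply Real.rpow_le_rpow (norm_nonneg v) _ hβ0
            linarith [norm_nonneg v]
        _ ≤ (1 + ‖v‖) ^ (1:ℝ) :=
            Real.rpow_le_rpow_of_exponent_le (by linarith [norm_nonneg v]) hβ1
        _ = 1 + ‖v‖ := Real.rpow_one _
    have h1v : (0:ℝ) < 1 + ‖v‖ := by positivity
    have hps : (1 + ‖v‖) * ((1 + ‖v‖) ^ (n + 2))⁻¹ = ((1 + ‖v‖) ^ (n + 1))⁻¹ := by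
      rw [pow_succ]
      field_simp
    calc ‖f x - f y‖ * ‖Kker n a h x y‖
        ≤ (H * ‖x - y‖ ^ β) * (((2 * π * h) ^ n)⁻¹ * (Cd * ((1 + ‖v‖) ^ (n + 2))⁻¹)) := by
          apply mul_le_mul (hfd x y) (hKb x y) (norm_nonneg _)
          exact mul_nonneg hH0 (Real.rpow_nonneg (norm_nonneg _) _)
      _ ≤ (H * (h ^ β * (1 + ‖v‖))) * (((2 * π * h) ^ n)⁻¹ * (Cd * ((1 + ‖v‖) ^ (n + 2))⁻¹)) := by
          apply mul_le_mul_of_nonneg_right (mul_le_mul_of_nonneg_left hvβ hH0)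
          positivity
      _ = D * ((1 + ‖v‖) * ((1 + ‖v‖) ^ (n + 2))⁻¹) := by rw [hD]; ring
      _ = D * ψ v := by rw [hps]
  -- the scaled integral
  have hψs : Integrable fun z : Euc n => ψ (h⁻¹ • z) := hψi.comp_smul (inv_ne_zero hh.ne')
  have hval : (∫ z : Euc n, ψ (h⁻¹ • z)) = h ^ n * Jψ := by
    rw [MeasureTheory.Measure.integral_comp_smul volume ψ h⁻¹, finrank_euclideanSpace_fin,
      inv_pow, inv_inv, abs_of_pos (pow_pos hh n), smul_eq_mul]
  have hrow : ∀ x : Euc n,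
      (∫ y : Euc n, ‖f x - f y‖ * ‖Kker n a h x y‖) ≤ Cfin * H * h ^ β := by
    intro x
    have hGint : Integrable fun y : Euc n => D * ψ (h⁻¹ • (x - y)) :=
      (hψs.comp_sub_left x).const_mul D
    have hle := MeasureTheory.integral_mono_of_nonneg
      (Filter.Eventually.of_forall fun y => mul_nonneg (norm_nonneg _) (norm_nonneg _))
      hGint (Filter.Eventually.of_forall fun y => hpt x y)
    refine le_trans hle ?_
    rw [MeasureTheory.integral_const_mul D _,
      MeasureTheory.integral_sub_left_eq_self (fun z : Euc n => ψ (h⁻¹ • z)) volume x, hval]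
    rw [hD, hCfin]
    have hch : ((2 * π * h) ^ n)⁻¹ * h ^ n = ((2 * π) ^ n)⁻¹ := by
      rw [mul_pow]
      field_simp
    calc H * h ^ β * Cd * ((2 * π * h) ^ n)⁻¹ * (h ^ n * Jψ)
        = (((2 * π * h) ^ n)⁻¹ * h ^ n) * (H * h ^ β * Cd * Jψ) := by ring
      _ = ((2 * π) ^ n)⁻¹ * (H * h ^ β * Cd * Jψ) := by rw [hch]
      _ = Cd * ((2 * π) ^ n)⁻¹ * Jψ * H * h ^ β := by ring
      _ ≤ Cd * ((2 * π) ^ n)⁻¹ * Jψ * H * h ^ β := le_refl _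
  have hcol : ∀ y : Euc n,
      (∫ x : Euc n, ‖f x - f y‖ * ‖Kker n a h x y‖) ≤ Cfin * H * h ^ β := by
    intro y
    have hGint : Integrable fun x : Euc n => D * ψ (h⁻¹ • (x - y)) := by
      have := hψs.comp_sub_right y
      exact this.const_mul D
    have hle := MeasureTheory.integral_mono_of_nonneg
      (Filter.Eventually.of_forall fun x => mul_nonneg (norm_nonneg _) (norm_nonneg _))
      hGint (Filter.Eventually.of_forall fun x => hpt x y)
    refine le_trans hle ?_
    rw [MeasureTheory.integral_const_mul D _,
      MeasureTheory.integral_sub_right_eq_self (fun z : Euc n => ψ (h⁻¹ • z)) y, hval]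
    rw [hD, hCfin]
    have hch : ((2 * π * h) ^ n)⁻¹ * h ^ n = ((2 * π) ^ n)⁻¹ := by
      rw [mul_pow]
      field_simp
    calc H * h ^ β * Cd * ((2 * π * h) ^ n)⁻¹ * (h ^ n * Jψ)
        = (((2 * π * h) ^ n)⁻¹ * h ^ n) * (H * h ^ β * Cd * Jψ) := by ring
      _ = ((2 * π) ^ n)⁻¹ * (H * h ^ β * Cd * Jψ) := by rw [hch]
      _ = Cd * ((2 * π) ^ n)⁻¹ * Jψ * H * h ^ β := by ring
      _ ≤ Cd * ((2 * π) ^ n)⁻¹ * Jψ * H * h ^ β := le_refl _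
  have hB0 : 0 ≤ Cfin * H * h ^ β := mul_nonneg (mul_nonneg hCfin0 hH0) hhβ0
  have hs1 : (⨆ x : Euc n, ∫ y : Euc n, ‖f x - f y‖ * ‖Kker n a h x y‖) ≤ Cfin * H * h ^ β :=
    Real.iSup_le hrow hB0
  have hs2 : (⨆ y : Euc n, ∫ x : Euc n, ‖f x - f y‖ * ‖Kker n a h x y‖) ≤ Cfin * H * h ^ β :=
    Real.iSup_le hcol hB0
  have hsupN : 0 ≤ supNorm n f := Real.iSup_nonneg fun x => norm_nonneg _
  have hHle : H ≤ holderNorm n β f := by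
    rw [holderNorm]; rw [hHdef]; linarith
  have hhBig : 0 ≤ holderNorm n β f := by rw [holderNorm]; rw [← hHdef]; linarith
  calc (⨆ x : Euc n, ∫ y : Euc n, ‖f x - f y‖ * ‖Kker n a h x y‖) +
        (⨆ y : Euc n, ∫ x : Euc n, ‖f x - f y‖ * ‖Kker n a h x y‖)
      ≤ Cfin * H * h ^ β + Cfin * H * h ^ β := add_le_add hs1 hs2
    _ = 2 * Cfin * (H * h ^ β) := by ring
    _ ≤ (2 * Cfin + 1) * (holderNorm n β f * h ^ β) := by
        apply mul_le_mul (by linarith) (mul_le_mul_of_nonneg_right hHle hhβ0)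
          (mul_nonneg hH0 hhβ0) (by linarith)
    _ = (2 * Cfin + 1) * h ^ β * holderNorm n β f := by ring


end
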